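/- Every k-molecule has entanglement exactly k. -/

import Mathlib

open SimpleGraph

/-- `G` is `m`-connected in the sense of Menger: any two distinct vertices are
joined by `m` pairwise distinct, internally disjoint paths. -/
def MengerConnected {V : Type*} (m : ℕ) (G : SimpleGraph V) : Prop :=
  ∀ u v : V, u ≠ v → ∃ P : Fin m → G.Path u v, Function.Injective P ∧
    ∀ i j, i ≠ j → ∀ x, x ∈ (P i).1.support → x ∈ (P j).1.support → x = u ∨ x = v

/-- The connectivity of a graph: the largest `m` for which it is `m`-connected.
(With this definition the connectivity of the `k`-clique is `k-1`, as in the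
paper's convention.) -/
noncomputable def connectivity {V : Type*} (G : SimpleGraph V) : ℕ :=
  sSup {m | MengerConnected m G}

/-- The `k`-molecule `ϑ_{B_k}^{Bs,h}`: its vertices are a base `B_k` of `k`
vertices (the `Sum.inl` vertices) carrying the internal edge set `Bs`, together
with `h` further vertices `v₁, …, v_h` (the `Sum.inr` vertices), each adjacent
to every base vertex and to no other non-base vertex. -/
def molecule (k h : ℕ) (Bs : SimpleGraph (Fin k)) : SimpleGraph (Fin k ⊕ Fin h) where
  Adj x y :=
    match x, y with
    | Sum.inl a, Sum.inl b => Bs.Adj a b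
    | Sum.inl _, Sum.inr _ => True
    | Sum.inr _, Sum.inl _ => True
    | Sum.inr _, Sum.inr _ => False
  symm := by constructor; rintro (a | a) (b | b) hab <;> first | exact hab.symm | trivial
  loopless := by constructor; rintro (a | a) hab <;> first | exact Bs.irrefl hab | exact hab

/-- Cops have a winning strategy in the entanglement game on `G` with `k` cops,
from the position where Thief stands on `v`, the cops occupy `C`, and it is
Cops' turn: Cops may skip, place a new cop on `v`, or move a placed cop to `v`;
then Thief must move along an edge to a cop-free vertex. As an inductive
predicate this holds exactly when Cops can force the play to be finite. -/
inductive CopsWin {V : Type*} [DecidableEq V] (G : SimpleGraph V) (k : ℕ) :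
    V → Finset V → Prop
  | step {v : V} {C C' : Finset V}
      (hmove : C' = C ∨ C' = insert v C ∨ ∃ x ∈ C, C' = insert v (C.erase x))
      (hcard : C'.card ≤ k)
      (hnext : ∀ w, G.Adj v w → w ∉ C' → CopsWin G k w C') :
      CopsWin G k v C

/-- The entanglement of `G`: the least `k` such that `k` cops catch Thief from
any initial vertex chosen by Thief. -/
noncomputable def entanglement {V : Type*} [DecidableEq V] (G : SimpleGraph V) : ℕ :=
  sInf {k | ∀ v : V, CopsWin G k v ∅}

/-!
The base `B_k` is a vertex cover of size `k`: the extra vertices are pairwise non-adjacent, so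
Thief standing on one of them must step back into the base. Hence `k` cops win by placing a cop
on every base vertex Thief visits and never moving it.

Conversely every vertex of the molecule has degree at least `k`. An extra vertex sees all of
`B_k`; a base vertex sees the `h` extra vertices and, since the second vertices of
`connectivity G[B_k]` internally disjoint paths to another base vertex are distinct neighbours,
at least `connectivity G[B_k]` base vertices, and `h + connectivity G[B_k] ≥ k`. With fewer than
`k` cops the current vertex always has a cop-free neighbour, so Thief is never caught.
-/

namespace SimpleGraph

variable {V : Type*} {G : SimpleGraph V}

theorem Walk.IsPath.eq_of_snd_eq {u v : V} {p q : G.Walk u v} (hp : p.IsPath) (hq : q.IsPath)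
    (huv : u ≠ v) (hps : p.snd = v) (hqs : q.snd = v) : p = q := by
  have hpe := hps ▸ Walk.mk_start_snd_mem_edges (Walk.not_nil_of_ne (p := p) huv)
  have hqe := hqs ▸ Walk.mk_start_snd_mem_edges (Walk.not_nil_of_ne (p := q) huv)
  rw [hp.eq_adj_toWalk_of_mem_edges hpe, hq.eq_adj_toWalk_of_mem_edges hqe]

theorem MengerConnected.le_degree {m : ℕ} (hm : MengerConnected m G) {u v : V} (huv : u ≠ v)
    [Fintype (G.neighborSet u)] : m ≤ G.degree u := by
  obtain ⟨P, hP, hdisj⟩ := hm u v huv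
  have hadj : ∀ i, G.Adj u (P i).1.snd := fun i => (P i).1.adj_snd (Walk.not_nil_of_ne huv)
  have hinj : Function.Injective fun i => (P i).1.snd := by
    intro i j (hij : (P i).1.snd = (P j).1.snd)
    by_contra hne
    have hi : (P i).1.snd ∈ (P i).1.support := (P i).1.getVert_mem_support 1
    have hj : (P j).1.snd ∈ (P j).1.support := (P j).1.getVert_mem_support 1
    rcases hdisj i j hne _ hi (hij ▸ hj) with hu | hv
    · exact (hadj i).ne hu.symm
    · exact hne (hP (Subtype.ext ((P i).2.eq_of_snd_eq (P j).2 huv hv (hij ▸ hv))))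
  simpa using Finset.card_le_card_of_injOn (s := Finset.univ) (t := G.neighborFinset u) _
    (fun i _ => (mem_neighborFinset _ _ _).2 (hadj i)) hinj.injOn

theorem mengerConnected_zero (G : SimpleGraph V) : MengerConnected 0 G :=
  fun _ _ _ => ⟨Fin.elim0, fun i => i.elim0, fun i => i.elim0⟩

theorem connectivity_le_degree (G : SimpleGraph V) (u : V) [Fintype (G.neighborSet u)] :
    connectivity G ≤ G.degree u := by
  by_cases hV : ∃ v, u ≠ v
  · obtain ⟨v, huv⟩ := hV
    exact csSup_le ⟨0, mengerConnected_zero G⟩ fun m hm => hm.le_degree huv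
  · -- With at most one vertex every `MengerConnected m G` holds vacuously, and `sSup` of an
    -- unbounded set of naturals is `0`.
    push Not at hV
    have hall : {m | MengerConnected m G} = Set.univ :=
      Set.eq_univ_of_forall fun m x y hxy => absurd ((hV x).symm.trans (hV y)) hxy
    rw [connectivity, hall, Set.Infinite.Nat.sSup_eq_zero Set.infinite_univ]
    exact Nat.zero_le _

section Game

variable [DecidableEq V]

theorem not_copsWin_of_lt_degree [G.LocallyFinite] {m : ℕ} (hdeg : ∀ v, m < G.degree v)
    {v : V} {C : Finset V} : ¬ CopsWin G m v C := by
  intro hwin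
  induction hwin with
  | step _ hcard _ ih =>
    obtain ⟨w, hw, hwC⟩ := Finset.exists_mem_notMem_of_card_lt_card (hcard.trans_lt (hdeg _))
    exact ih w ((mem_neighborFinset _ _ _).1 hw) hwC

theorem copsWin_of_isVertexCover {S : Finset V} (hS : G.IsVertexCover S) :
    ∀ C ⊆ S, ∀ v ∉ C, CopsWin G S.card v C := by
  intro C
  induction hn : (S \ C).card using Nat.strong_induction_on generalizing C with
  | _ n ih =>
  intro hCS
  have hbase : ∀ v ∈ S, v ∉ C → CopsWin G S.card v C := by
    intro v hvS hvC
    have hsub : insert v C ⊆ S := Finset.insert_subset hvS hCS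
    have hlt : (S \ insert v C).card < n := by
      rw [Finset.sdiff_insert, ← hn]
      exact Finset.card_erase_lt_of_mem (Finset.mem_sdiff.2 ⟨hvS, hvC⟩)
    exact .step (Or.inr (Or.inl rfl)) (Finset.card_le_card hsub)
      fun w _ hw => ih _ hlt _ rfl hsub w hw
  intro v hvC
  by_cases hvS : v ∈ S
  · exact hbase v hvS hvC
  · exact .step (Or.inl rfl) (Finset.card_le_card hCS)
      fun w hvw hwC => hbase w ((hS hvw).resolve_left hvS) hwC

theorem entanglement_le_card_of_isVertexCover {S : Finset V} (hS : G.IsVertexCover S) :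
    entanglement G ≤ S.card :=
  Nat.sInf_le fun v =>
    copsWin_of_isVertexCover hS ∅ (Finset.empty_subset S) v (Finset.notMem_empty v)

theorem le_entanglement_of_forall_le_degree [Fintype V] [Nonempty V] [G.LocallyFinite] {m : ℕ}
    (hdeg : ∀ v, m ≤ G.degree v) : m ≤ entanglement G := by
  have hwin : ∀ v, CopsWin G (Finset.univ : Finset V).card v ∅ := fun v =>
    copsWin_of_isVertexCover (by simp) ∅ (Finset.empty_subset _) v (Finset.notMem_empty v)
  refine le_csInf ⟨_, hwin⟩ fun n hn => ?_
  by_contra! hnm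
  exact not_copsWin_of_lt_degree (fun v => hnm.trans_le (hdeg v)) (hn (Classical.arbitrary V))

end Game

end SimpleGraph

section Molecule

open SimpleGraph

variable {k h : ℕ} (Bs : SimpleGraph (Fin k))

theorem molecule_isVertexCover_range_inl :
    (molecule k h Bs).IsVertexCover (Set.range Sum.inl) := by
  rintro (a | a) (b | b) hab <;> simp_all [molecule]

theorem molecule_degree_inl (a : Fin k) [Fintype (Bs.neighborSet a)]
    [Fintype ((molecule k h Bs).neighborSet (.inl a))] :
    (molecule k h Bs).degree (.inl a) = Bs.degree a + h := by
  have : (molecule k h Bs).neighborFinset (.inl a) = (Bs.neighborFinset a).disjSum Finset.univ := by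
    ext (b | b) <;> simp only [mem_neighborFinset] <;> simp [molecule]
  rw [← card_neighborFinset_eq_degree, this, Finset.card_disjSum, card_neighborFinset_eq_degree,
    Finset.card_univ, Fintype.card_fin]

theorem molecule_degree_inr (b : Fin h) [Fintype ((molecule k h Bs).neighborSet (.inr b))] :
    (molecule k h Bs).degree (.inr b) = k := by
  have : (molecule k h Bs).neighborFinset (.inr b) = Finset.univ.disjSum ∅ := by
    ext (a | a) <;> simp only [mem_neighborFinset] <;> simp [molecule]
  rw [← card_neighborFinset_eq_degree, this, Finset.card_disjSum]
  simp

end Molecule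

theorem molecule_entanglement_general (k h : ℕ) (Bs : SimpleGraph (Fin k))
    (hcond : k - connectivity Bs ≤ h) :
    entanglement (molecule k h Bs) = k := by
  classical
  have hcover : (molecule k h Bs).IsVertexCover
      ((Finset.univ.map .inl : Finset (Fin k ⊕ Fin h)) : Set (Fin k ⊕ Fin h)) := by
    simpa using molecule_isVertexCover_range_inl Bs
  apply le_antisymm
  · simpa using entanglement_le_card_of_isVertexCover hcover
  · rcases Nat.eq_zero_or_pos k with rfl | hk
    · exact Nat.zero_le _
    have : Nonempty (Fin k ⊕ Fin h) := ⟨.inl ⟨0, hk⟩⟩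
    refine le_entanglement_of_forall_le_degree fun v => ?_
    rcases v with a | b
    · have := connectivity_le_degree Bs a
      rw [molecule_degree_inl]
      omega
    · rw [molecule_degree_inr]

/-- every `k`-molecule has entanglement exactly `k`. -/
theorem molecule_entanglement (k h : ℕ) (hk : 1 ≤ k) (hh : 1 ≤ h)
    (Bs : SimpleGraph (Fin k)) (hcond : k - connectivity Bs ≤ h) :
    entanglement (molecule k h Bs) = k :=
  molecule_entanglement_general k h Bs hcond
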